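/- arXiv:2309.00605 — 2 statements merged into one kernel-verified Lean document; each statement's English description precedes it below -/
import Mathlib

section
/- Under the setting of the projection-free tangent-plane update (m^{i+1} = m^i + k v^i, m^i · v^i = 0, |m⁰| = 1), for all j the projection error satisfies |m^j - m^j/|m^j|| ≤ (k²/2) Σ_{i=0}^{j-1} |v^i|². -/
/-!
Since each increment `k • v i` is orthogonal to `m i`, Pythagoras gives
`‖m j‖² = 1 + k² ∑_{i<j} ‖v i‖²`, so `‖m j‖ ≥ 1`. The projection error of a vector `x`
with `‖x‖ ≥ 1` is `‖x‖ - 1`, and `r - 1 ≤ (r² - 1) / 2` because `(r - 1)² ≥ 0`.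
-/

open scoped RealInnerProductSpace

section

variable {E : Type*} [NormedAddCommGroup E] [InnerProductSpace ℝ E]

theorem norm_sub_inv_norm_smul_self {x : E} (hx : x ≠ 0) :
    ‖x - ‖x‖⁻¹ • x‖ = |‖x‖ - 1| := by
  have hx' : ‖x‖ ≠ 0 := norm_ne_zero_iff.mpr hx
  calc ‖x - ‖x‖⁻¹ • x‖ = ‖(1 - ‖x‖⁻¹) • x‖ := by rw [sub_smul, one_smul]
    _ = |1 - ‖x‖⁻¹| * ‖x‖ := by rw [norm_smul, Real.norm_eq_abs]
    _ = |(1 - ‖x‖⁻¹) * ‖x‖| := by rw [abs_mul, abs_norm]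
    _ = |‖x‖ - 1| := by rw [sub_mul, inv_mul_cancel₀ hx', one_mul]

theorem norm_sub_inv_norm_smul_self_le {x : E} (hx : 1 ≤ ‖x‖) :
    ‖x - ‖x‖⁻¹ • x‖ ≤ (‖x‖ ^ 2 - 1) / 2 := by
  rw [norm_sub_inv_norm_smul_self (norm_pos_iff.mp (by linarith)),
    abs_of_nonneg (by linarith)]
  nlinarith [sq_nonneg (‖x‖ - 1)]

theorem norm_add_smul_sq_of_inner_eq_zero {x w : E} (h : ⟪x, w⟫ = 0) (k : ℝ) :
    ‖x + k • w‖ ^ 2 = ‖x‖ ^ 2 + k ^ 2 * ‖w‖ ^ 2 := by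
  rw [norm_add_sq_real, real_inner_smul_right, h, norm_smul, Real.norm_eq_abs, mul_pow, sq_abs]
  ring

theorem norm_sq_eq_of_orthogonal_updates {N : ℕ} {k : ℝ} {m v : ℕ → E}
    (hupd : ∀ i < N, m (i + 1) = m i + k • v i) (horth : ∀ i < N, ⟪m i, v i⟫ = 0) :
    ∀ j ≤ N, ‖m j‖ ^ 2 = ‖m 0‖ ^ 2 + k ^ 2 * ∑ i ∈ Finset.range j, ‖v i‖ ^ 2 := by
  intro j hj
  induction j with
  | zero => simp
  | succ j ih =>
    rw [hupd j hj, norm_add_smul_sq_of_inner_eq_zero (horth j hj), ih (by omega),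
      Finset.sum_range_succ]
    ring

end

theorem stmt8_general (N : ℕ) (k : ℝ)
    (m v : ℕ → EuclideanSpace ℝ (Fin 3))
    (hm0 : ‖m 0‖ = 1)
    (hupd : ∀ i < N, m (i + 1) = m i + k • v i)
    (horth : ∀ i < N, ⟪m i, v i⟫ = 0) :
    ∀ j ≤ N, ‖m j - ‖m j‖⁻¹ • m j‖ ≤
      (k ^ 2 / 2) * ∑ i ∈ Finset.range j, ‖v i‖ ^ 2 := by
  intro j hj
  have hsq := norm_sq_eq_of_orthogonal_updates hupd horth j hj
  rw [hm0] at hsq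
  have hsum : 0 ≤ k ^ 2 * ∑ i ∈ Finset.range j, ‖v i‖ ^ 2 :=
    mul_nonneg (sq_nonneg k) (Finset.sum_nonneg fun i _ => sq_nonneg ‖v i‖)
  have hge : 1 ≤ ‖m j‖ :=
    (one_le_pow_iff_of_nonneg (norm_nonneg _) two_ne_zero).mp (by linarith)
  calc ‖m j - ‖m j‖⁻¹ • m j‖ ≤ (‖m j‖ ^ 2 - 1) / 2 := norm_sub_inv_norm_smul_self_le hge
    _ = (k ^ 2 / 2) * ∑ i ∈ Finset.range j, ‖v i‖ ^ 2 := by rw [hsq]; ring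

theorem stmt8 (N : ℕ) (k : ℝ) (hk : 0 < k)
    (m v : ℕ → EuclideanSpace ℝ (Fin 3))
    (hm0 : ‖m 0‖ = 1)
    (hupd : ∀ i < N, m (i + 1) = m i + k • v i)
    (horth : ∀ i < N, ⟪m i, v i⟫ = 0) :
    ∀ j ≤ N, ‖m j - ‖m j‖⁻¹ • m j‖ ≤
      (k ^ 2 / 2) * ∑ i ∈ Finset.range j, ‖v i‖ ^ 2 :=
  stmt8_general N k m v hm0 hupd horth
end

section
/- For fixed unit vector m ∈ ℝ³, α > 0, and v, h ∈ ℝ³ with m · v = 0: if α v + m × v = h - (h · m) m, then v = -m × h + α m × v. (Converse direction of the LLG reformulation.) -/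
open Matrix

theorem cross_cross_self_of_dotProduct_eq_zero {R : Type*} [CommRing R] {m v : Fin 3 → R}
    (hm : m ⬝ᵥ m = 1) (hmv : m ⬝ᵥ v = 0) : m ⨯₃ (m ⨯₃ v) = -v := by
  rw [cross_cross_eq_smul_sub_smul', hmv, hm, zero_smul, one_smul, zero_sub]

theorem stmt18_general (m v h : Fin 3 → ℝ) (α : ℝ)
    (hm : dotProduct m m = 1)
    (hmv : dotProduct m v = 0)
    (heq : α • v + crossProduct m v = h - (dotProduct h m) • m) :
    v = -(crossProduct m h) + α • crossProduct m v := by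
  have hcross : α • m ⨯₃ v - v = m ⨯₃ h := by
    simpa only [map_add, map_sub, map_smul, cross_self, smul_zero, sub_zero,
      cross_cross_self_of_dotProduct_eq_zero hm hmv, ← sub_eq_add_neg] using
      congrArg (m ⨯₃ ·) heq
  rw [← hcross]
  abel

theorem stmt18 (m v h : Fin 3 → ℝ) (α : ℝ) (hα : 0 < α)
    (hm : dotProduct m m = 1)
    (hmv : dotProduct m v = 0)
    (heq : α • v + crossProduct m v = h - (dotProduct h m) • m) :
    v = -(crossProduct m h) + α • crossProduct m v :=
  stmt18_general m v h α hm hmv heq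
end
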